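/- arXiv:1603.01283 — 4 statements merged into one kernel-verified Lean document; each statement's English description precedes it below -/
import Mathlib

section
/- Let n ≥ 1 be an integer with n ≠ 7 and n ≠ 8. If x ∈ P satisfies ⟨x,x⟩ = 2, then x = e_i − e_j for some indices i ≠ j (i.e., every vector of squared length 2 in the weight lattice of A_n is a root). -/
/-!
Write `N` for the dimension `n + 1`. If two coordinates of `x` differ by at least `2`, then
`‖x - (e_i - e_j)‖² = 4 - 2 (x_i - x_j) ≤ 0`, so `x` is that root. Otherwise the integrality of the
differences forces `x` to take only the values `m` and `m + 1`, say `m + 1` exactly `k` times;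
then `∑ x = 0` gives `m = -k / N` and `‖x‖² = k (N - k) / N`, and `k (N - k) = 2 N` has integer
solutions only for `N = 8, 9`.
-/

open Matrix

lemma eq_single_sub_single_of_two_le_sub {ι : Type*} [Fintype ι] [DecidableEq ι] {x : ι → ℝ}
    (hlen : ∑ i, x i ^ 2 = 2) {i j : ι} (hij : 2 ≤ x i - x j) :
    x = Pi.single i 1 - Pi.single j 1 := by
  have hne : i ≠ j := by rintro rfl; norm_num at hij
  set e : ι → ℝ := Pi.single i 1 - Pi.single j 1
  have hxx : x ⬝ᵥ x = 2 := by simpa only [dotProduct, sq] using hlen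
  have hxe : x ⬝ᵥ e = x i - x j := by simp [e, dotProduct_sub, dotProduct_single]
  have hee : e ⬝ᵥ e = 2 := by
    simp [e, dotProduct_sub, dotProduct_single, hne, hne.symm]
    norm_num
  clear_value e
  have hdist : (x - e) ⬝ᵥ (x - e) = 0 := by
    refine le_antisymm ?_ (Finset.sum_nonneg fun k _ => mul_self_nonneg _)
    rw [sub_dotProduct, dotProduct_sub, dotProduct_sub, dotProduct_comm e x]
    linarith
  exact sub_eq_zero.mp (dotProduct_self_eq_zero.mp hdist)

lemma eq_eight_or_nine_of_mul_sub_eq {N k : ℤ} (hN : 0 < N) (h : k * (N - k) = 2 * N) :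
    N = 8 ∨ N = 9 := by
  have hk : N * (k - 2) = k ^ 2 := by linear_combination h
  have hk2 : 2 < k := by nlinarith
  have hdvd : k - 2 ∣ 4 := by
    have h4 : 4 = k ^ 2 - (k - 2) * (k + 2) := by ring
    rw [h4, ← hk]
    exact dvd_sub (dvd_mul_left _ _) (dvd_mul_right _ _)
  have hk6 : k ≤ 6 := by linarith [Int.le_of_dvd (by norm_num) hdvd]
  interval_cases k <;> omega

lemma sum_mul_card_sub_sum_eq {ι : Type*} [Fintype ι] {x : ι → ℝ} {m : ℝ} {a : ι → ℤ}
    (ha : ∀ i, a i = 0 ∨ a i = 1) (hx : ∀ i, x i = m + a i)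
    (hsum : ∑ i, x i = 0) (hlen : ∑ i, x i ^ 2 = 2) :
    (∑ i, a i) * (Fintype.card ι - ∑ i, a i) = 2 * (Fintype.card ι : ℤ) := by
  have hsq : ∀ i, ((a i : ℝ)) ^ 2 = a i := fun i => by rcases ha i with h | h <;> simp [h]
  have hsum' : Fintype.card ι * m + ∑ i, (a i : ℝ) = 0 := by
    simpa [hx, Finset.sum_add_distrib] using hsum
  have hlen' : Fintype.card ι * m ^ 2 + 2 * m * ∑ i, (a i : ℝ) + ∑ i, (a i : ℝ) = 2 := by
    simp only [hx, add_sq, Finset.sum_add_distrib, hsq] at hlen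
    simpa [Finset.mul_sum, mul_assoc] using hlen
  have key : (∑ i, (a i : ℝ)) * (Fintype.card ι - ∑ i, (a i : ℝ)) = 2 * Fintype.card ι := by
    linear_combination
      Fintype.card ι * hlen' - (Fintype.card ι * m + ∑ i, (a i : ℝ)) * hsum'
  exact_mod_cast key

lemma exists_two_le_sub {ι : Type*} [Fintype ι] {x : ι → ℝ} (hsum : ∑ i, x i = 0)
    (hint : ∀ i j, ∃ m : ℤ, x i - x j = m) (hlen : ∑ i, x i ^ 2 = 2)
    (h8 : Fintype.card ι ≠ 8) (h9 : Fintype.card ι ≠ 9) :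
    ∃ i j, 2 ≤ x i - x j := by
  by_contra! hlt
  have : Nonempty ι := by
    by_contra hι
    simp [not_nonempty_iff.mp hι] at hlen
  obtain ⟨i₀, hmin⟩ := Finite.exists_min x
  choose a ha using fun i => hint i i₀
  have ha01 : ∀ i, a i = 0 ∨ a i = 1 := fun i => by
    have h0 : (0 : ℝ) ≤ a i := by linarith [ha i, hmin i]
    have h2 : (a i : ℝ) < 2 := by linarith [ha i, hlt i i₀]
    norm_cast at h0 h2
    omega
  have key := sum_mul_card_sub_sum_eq (m := x i₀) ha01 (fun i => by linarith [ha i]) hsum hlen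
  rcases eq_eight_or_nine_of_mul_sub_eq (by exact_mod_cast Fintype.card_pos) key with h | h <;>
    omega

theorem stmt_0_general (n : ℕ) (h7 : n ≠ 7) (h8 : n ≠ 8)
    (x : Fin (n + 1) → ℝ)
    (hsum : ∑ i, x i = 0)
    (hint : ∀ i j, ∃ m : ℤ, x i - x j = m)
    (hlen : ∑ i, x i ^ 2 = 2) :
    ∃ i j : Fin (n + 1), i ≠ j ∧
      x = Pi.single i (1 : ℝ) - Pi.single j (1 : ℝ) := by
  obtain ⟨i, j, hij⟩ := exists_two_le_sub hsum hint hlen (by simpa using h7) (by simpa using h8)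
  refine ⟨i, j, ?_, eq_single_sub_single_of_two_le_sub hlen hij⟩
  rintro rfl
  norm_num at hij

/-- Every vector of squared length 2 in the weight lattice of `A_n`
(`n ≥ 1`, `n ≠ 7`, `n ≠ 8`) is a root `e_i - e_j`. -/
theorem stmt_0 (n : ℕ) (hn : 1 ≤ n) (h7 : n ≠ 7) (h8 : n ≠ 8)
    (x : Fin (n + 1) → ℝ)
    (hsum : ∑ i, x i = 0)
    (hint : ∀ i j, ∃ m : ℤ, x i - x j = m)
    (hlen : ∑ i, x i ^ 2 = 2) :
    ∃ i j : Fin (n + 1), i ≠ j ∧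
      x = Pi.single i (1 : ℝ) - Pi.single j (1 : ℝ) :=
  stmt_0_general n h7 h8 x hsum hint hlen
end

section
/- For every integer n ≥ 1: there exists an integer k with 0 ≤ k ≤ n satisfying (n − k) + k(n − k) = 2(n + 1) (equivalently (k + 1)(n − k) = 2(n + 1)) if and only if n = 7 or n = 8. -/
/-- For an integer `n ≥ 1`, there is an integer `k` with `0 ≤ k ≤ n` and
`(n - k) + k * (n - k) = 2 * (n + 1)` if and only if `n = 7` or `n = 8`. -/
theorem stmt_3 (n : ℤ) (hn : 1 ≤ n) :
    (∃ k : ℤ, 0 ≤ k ∧ k ≤ n ∧ (n - k) + k * (n - k) = 2 * (n + 1)) ↔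
      (n = 7 ∨ n = 8) := by
  constructor
  · rintro ⟨k, hk0, hkn, he⟩
    have h4 : (k - 1) * (n - k - 2) = 4 := by ring_nf; ring_nf at he; linarith
    have hk5 : k ≤ 5 := by
      by_contra h
      push_neg at h
      have hd : (k - 1) ∣ 4 := ⟨n - k - 2, h4.symm⟩
      have := Int.le_of_dvd (by norm_num) hd
      omega
    interval_cases k <;> omega
  · rintro (rfl | rfl)
    · exact ⟨3, by norm_num⟩
    · exact ⟨2, by norm_num⟩
end

section
/- Let w ∈ Λ₈ and let w' = w − (⟨w, e₁ − e₂⟩/2)(e₁ − e₂) be the orthogonal projection of w onto the hyperplane orthogonal to e₁ − e₂ (explicitly, w' replaces the first two coordinates of w by their average). If ⟨w', w'⟩ = 2, then w' ∈ Λ₈. (Hence every vector of squared length 2 in the orthogonal projection of Λ₈ onto (e₁ − e₂)^⊥ — the E₇ weight lattice — is a root of E₈ orthogonal to e₁ − e₂, i.e., a root of E₇.) -/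
/-- Let `w ∈ Λ₈` and let `w'` be the orthogonal projection of `w` onto the
hyperplane orthogonal to `e₁ - e₂` (replacing the first two coordinates by
their average). If `⟨w', w'⟩ = 2`, then `w' ∈ Λ₈`. -/
theorem stmt_9 (w : Fin 8 → ℝ)
    (hw1 : (∀ i, ∃ m : ℤ, w i = m) ∨ (∀ i, ∃ m : ℤ, w i = m + 1/2))
    (hw2 : ∃ m : ℤ, ∑ i, w i = 2 * m)
    (w' : Fin 8 → ℝ)
    (hw' : ∀ k, w' k = if k = 0 ∨ k = 1 then (w 0 + w 1) / 2 else w k)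
    (hlen : ∑ i, w' i ^ 2 = 2) :
    ((∀ i, ∃ m : ℤ, w' i = m) ∨ (∀ i, ∃ m : ℤ, w' i = m + 1/2)) ∧
      ∃ m : ℤ, ∑ i, w' i = 2 * m := by
  have h0 : w' 0 = (w 0 + w 1) / 2 := by rw [hw']; simp
  have h1 : w' 1 = (w 0 + w 1) / 2 := by rw [hw']; simp
  have h2 : w' 2 = w 2 := by rw [hw']; simp
  have h3 : w' 3 = w 3 := by rw [hw']; simp
  have h4 : w' 4 = w 4 := by rw [hw']; simp
  have h5 : w' 5 = w 5 := by rw [hw']; simp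
  have h6 : w' 6 = w 6 := by rw [hw']; simp
  have h7 : w' 7 = w 7 := by rw [hw']; simp
  have hsum : ∑ i, w' i = ∑ i, w i := by
    rw [Fin.sum_univ_eight, Fin.sum_univ_eight, h0, h1, h2, h3, h4, h5, h6, h7]
    ring
  rw [Fin.sum_univ_eight, h0, h1, h2, h3, h4, h5, h6, h7] at hlen
  refine ⟨?_, by rw [hsum]; exact hw2⟩
  rcases hw1 with h | h
  · -- all integers
    choose m hm using h
    left
    rw [hm 0, hm 1, hm 2, hm 3, hm 4, hm 5, hm 6, hm 7] at hlen
    set R : ℤ := (m 2)^2 + (m 3)^2 + (m 4)^2 + (m 5)^2 + (m 6)^2 + (m 7)^2 with hR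
    have key : (m 0 + m 1)^2 + 2 * R = 4 := by
      have : (((m 0 + m 1)^2 + 2 * R : ℤ) : ℝ) = 4 := by push_cast [hR]; linear_combination 2 * hlen
      exact_mod_cast this
    have heven : Even ((m 0 + m 1)^2) := ⟨2 - R, by linarith⟩
    have ht : Even (m 0 + m 1) := (Int.even_pow.mp heven).1
    obtain ⟨k, hk⟩ := ht
    have hk' : (m 0 : ℝ) + m 1 = k + k := by exact_mod_cast congrArg (Int.cast : ℤ → ℝ) hk
    intro i
    rw [hw' i]
    split
    · exact ⟨k, by rw [hm 0, hm 1]; push_cast; linarith⟩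
    · exact ⟨m i, hm i⟩
  · -- all half-integers
    choose m hm using h
    right
    rw [hm 0, hm 1, hm 2, hm 3, hm 4, hm 5, hm 6, hm 7] at hlen
    set R : ℤ := (m 2)^2 + (m 2) + (m 3)^2 + (m 3) + (m 4)^2 + (m 4)
      + (m 5)^2 + (m 5) + (m 6)^2 + (m 6) + (m 7)^2 + (m 7) with hR
    have key : (m 0 + m 1 + 1)^2 + 2 * R = 1 := by
      have : (((m 0 + m 1 + 1)^2 + 2 * R : ℤ) : ℝ) = 1 := by push_cast [hR]; linear_combination 2 * hlen
      exact_mod_cast this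
    have hodd : Odd ((m 0 + m 1 + 1)^2) := ⟨-R, by linarith⟩
    have ht : Odd (m 0 + m 1 + 1) := by
      rcases Int.even_or_odd (m 0 + m 1 + 1) with he | ho
      · exact absurd hodd (by simpa [Int.even_pow] using he)
      · exact ho
    obtain ⟨k, hk⟩ := ht
    have hk' : (m 0 : ℝ) + m 1 + 1 = 2 * k + 1 := by exact_mod_cast congrArg (Int.cast : ℤ → ℝ) hk
    intro i
    rw [hw' i]
    split
    · exact ⟨k, by rw [hm 0, hm 1]; push_cast; linarith⟩
    · exact ⟨m i, hm i⟩
end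

section
/- Let w ∈ Λ₈ and let w' be the orthogonal projection of w onto the orthogonal complement of the span of e₁ − e₂ and e₂ − e₃ (explicitly, w' replaces the first three coordinates of w by their common average (w₁ + w₂ + w₃)/3). If ⟨w', w'⟩ = 2, then w' ∈ Λ₈. (Hence every vector of squared length 2 in the orthogonal projection of Λ₈ onto this complement — the E₆ weight lattice — is a root of E₈ orthogonal to e₁ − e₂ and e₂ − e₃, i.e., a root of E₆.) -/
lemma stmt_10_aux (n : ℤ) : 0 ≤ n ^ 2 + n := by
  rcases le_or_gt 0 n with h | h
  · nlinarith
  · nlinarith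

/-- Let `w ∈ Λ₈` and let `w'` be the orthogonal projection of `w` onto the
orthogonal complement of the span of `e₁ - e₂` and `e₂ - e₃` (replacing the
first three coordinates by their common average). If `⟨w', w'⟩ = 2`, then
`w' ∈ Λ₈`. -/
theorem stmt_10 (w : Fin 8 → ℝ)
    (hw1 : (∀ i, ∃ m : ℤ, w i = m) ∨ (∀ i, ∃ m : ℤ, w i = m + 1/2))
    (hw2 : ∃ m : ℤ, ∑ i, w i = 2 * m)
    (w' : Fin 8 → ℝ)
    (hw' : ∀ k, w' k =
      if k = 0 ∨ k = 1 ∨ k = 2 then (w 0 + w 1 + w 2) / 3 else w k)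
    (hlen : ∑ i, w' i ^ 2 = 2) :
    ((∀ i, ∃ m : ℤ, w' i = m) ∨ (∀ i, ∃ m : ℤ, w' i = m + 1/2)) ∧
      ∃ m : ℤ, ∑ i, w' i = 2 * m := by
  have h0 : w' 0 = (w 0 + w 1 + w 2) / 3 := by rw [hw' 0, if_pos (by decide)]
  have h1 : w' 1 = (w 0 + w 1 + w 2) / 3 := by rw [hw' 1, if_pos (by decide)]
  have h2 : w' 2 = (w 0 + w 1 + w 2) / 3 := by rw [hw' 2, if_pos (by decide)]
  have h3 : w' 3 = w 3 := by rw [hw' 3, if_neg (by decide)]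
  have h4 : w' 4 = w 4 := by rw [hw' 4, if_neg (by decide)]
  have h5 : w' 5 = w 5 := by rw [hw' 5, if_neg (by decide)]
  have h6 : w' 6 = w 6 := by rw [hw' 6, if_neg (by decide)]
  have h7 : w' 7 = w 7 := by rw [hw' 7, if_neg (by decide)]
  constructor
  · rcases hw1 with h | h
    · -- integer case
      choose m hm using h
      rw [Fin.sum_univ_eight, h0, h1, h2, h3, h4, h5, h6, h7,
        hm 0, hm 1, hm 2, hm 3, hm 4, hm 5, hm 6, hm 7] at hlen
      have key : (m 0 + m 1 + m 2) ^ 2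
          + 3 * ((m 3) ^ 2 + (m 4) ^ 2 + (m 5) ^ 2 + (m 6) ^ 2 + (m 7) ^ 2) = 6 := by
        have hr : ((m 0 + m 1 + m 2 : ℤ) : ℝ) ^ 2
            + 3 * (((m 3 : ℤ) : ℝ) ^ 2 + ((m 4 : ℤ) : ℝ) ^ 2 + ((m 5 : ℤ) : ℝ) ^ 2
              + ((m 6 : ℤ) : ℝ) ^ 2 + ((m 7 : ℤ) : ℝ) ^ 2) = 6 := by
          push_cast
          linear_combination 3 * hlen
        exact_mod_cast hr
      have hdvd : (3 : ℤ) ∣ (m 0 + m 1 + m 2) := by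
        have hd2 : (3 : ℤ) ∣ (m 0 + m 1 + m 2) ^ 2 :=
          ⟨2 - ((m 3) ^ 2 + (m 4) ^ 2 + (m 5) ^ 2 + (m 6) ^ 2 + (m 7) ^ 2), by linarith⟩
        exact Int.prime_three.dvd_of_dvd_pow hd2
      obtain ⟨k, hk⟩ := hdvd
      have hT : 0 ≤ (m 3) ^ 2 + (m 4) ^ 2 + (m 5) ^ 2 + (m 6) ^ 2 + (m 7) ^ 2 := by positivity
      have key2 : 9 * k ^ 2
          + 3 * ((m 3) ^ 2 + (m 4) ^ 2 + (m 5) ^ 2 + (m 6) ^ 2 + (m 7) ^ 2) = 6 := by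
        linear_combination key - (m 0 + m 1 + m 2 + 3 * k) * hk
      have hk1 : k ^ 2 < 0 + 1 := by linarith
      have hk0 : k = 0 := by
        have hsq : k ^ 2 = 0 := le_antisymm (Int.lt_add_one_iff.mp hk1) (sq_nonneg k)
        exact (pow_eq_zero_iff two_ne_zero).mp hsq
      have hS : m 0 + m 1 + m 2 = 0 := by rw [hk, hk0]; ring
      left
      intro i
      rw [hw' i]
      split_ifs with hcond
      · refine ⟨0, ?_⟩
        have hc : ((m 0 : ℝ) + m 1 + m 2) = 0 := by exact_mod_cast hS
        rw [hm 0, hm 1, hm 2]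
        push_cast
        linarith
      · exact ⟨m i, hm i⟩
    · -- half-integer case
      choose m hm using h
      rw [Fin.sum_univ_eight, h0, h1, h2, h3, h4, h5, h6, h7,
        hm 0, hm 1, hm 2, hm 3, hm 4, hm 5, hm 6, hm 7] at hlen
      have key : (2 * (m 0 + m 1 + m 2) + 3) ^ 2
          + 12 * (((m 3) ^ 2 + m 3) + ((m 4) ^ 2 + m 4) + ((m 5) ^ 2 + m 5)
            + ((m 6) ^ 2 + m 6) + ((m 7) ^ 2 + m 7)) = 9 := by
        have hr : ((2 * (m 0 + m 1 + m 2) + 3 : ℤ) : ℝ) ^ 2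
            + 12 * ((((m 3 : ℤ) : ℝ) ^ 2 + ((m 3 : ℤ) : ℝ)) + (((m 4 : ℤ) : ℝ) ^ 2 + ((m 4 : ℤ) : ℝ))
              + (((m 5 : ℤ) : ℝ) ^ 2 + ((m 5 : ℤ) : ℝ)) + (((m 6 : ℤ) : ℝ) ^ 2 + ((m 6 : ℤ) : ℝ))
              + (((m 7 : ℤ) : ℝ) ^ 2 + ((m 7 : ℤ) : ℝ))) = 9 := by
          push_cast
          linear_combination 12 * hlen
        exact_mod_cast hr
      have hT : 0 ≤ ((m 3) ^ 2 + m 3) + ((m 4) ^ 2 + m 4) + ((m 5) ^ 2 + m 5)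
          + ((m 6) ^ 2 + m 6) + ((m 7) ^ 2 + m 7) := by
        have := stmt_10_aux (m 3); have := stmt_10_aux (m 4); have := stmt_10_aux (m 5)
        have := stmt_10_aux (m 6); have := stmt_10_aux (m 7)
        linarith
      have hne : (2 * (m 0 + m 1 + m 2) + 3) ≠ 0 := by omega
      have hone : 1 ≤ (2 * (m 0 + m 1 + m 2) + 3) ^ 2 := by
        rcases lt_or_gt_of_ne hne with h' | h' <;> nlinarith
      have hTlt : ((m 3) ^ 2 + m 3) + ((m 4) ^ 2 + m 4) + ((m 5) ^ 2 + m 5)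
          + ((m 6) ^ 2 + m 6) + ((m 7) ^ 2 + m 7) < 0 + 1 := by linarith
      have hT0 : ((m 3) ^ 2 + m 3) + ((m 4) ^ 2 + m 4) + ((m 5) ^ 2 + m 5)
          + ((m 6) ^ 2 + m 6) + ((m 7) ^ 2 + m 7) = 0 :=
        le_antisymm (Int.lt_add_one_iff.mp hTlt) hT
      have h4M : 4 * ((m 0 + m 1 + m 2) * ((m 0 + m 1 + m 2) + 3)) = 0 := by
        linear_combination key - 12 * hT0
      have hM0 : (m 0 + m 1 + m 2) * ((m 0 + m 1 + m 2) + 3) = 0 := by linarith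
      rcases mul_eq_zero.mp hM0 with hM | hM
      all_goals {
        right
        intro i
        rw [hw' i]
        split_ifs with hcond
        · first
          | (refine ⟨0, ?_⟩
             have hc : ((m 0 : ℝ) + m 1 + m 2) = 0 := by exact_mod_cast hM
             rw [hm 0, hm 1, hm 2]; push_cast; linarith)
          | (refine ⟨-1, ?_⟩
             have hc : ((m 0 : ℝ) + m 1 + m 2) = -3 := by
               have : m 0 + m 1 + m 2 = -3 := by omega
               exact_mod_cast this
             rw [hm 0, hm 1, hm 2]; push_cast; linarith)
        · exact ⟨m i, hm i⟩
      }
  · obtain ⟨n, hn⟩ := hw2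
    refine ⟨n, ?_⟩
    rw [Fin.sum_univ_eight] at hn ⊢
    rw [h0, h1, h2, h3, h4, h5, h6, h7]
    linarith
end
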